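/- arXiv:1407.7919 — 2 statements merged into one kernel-verified Lean document; each statement's English description precedes it below -/
import Mathlib

section
/- Let λ ∈ ℝ and let r : I → ℝ³∖{0} be a solution of the Poincaré problem in ℝ³∖{0}. Then the Poincaré vector L(t) = r(t) × ṙ(t) + λ r(t)/|r(t)| is constant on I, i.e. L(s) = L(t) for all s, t ∈ I. -/
open scoped InnerProductSpace

/-- The cross product on Euclidean 3-space. -/
noncomputable def cross3 (x y : EuclideanSpace ℝ (Fin 3)) : EuclideanSpace ℝ (Fin 3) :=
  (WithLp.equiv 2 (Fin 3 → ℝ)).symm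
    ![x 1 * y 2 - x 2 * y 1, x 2 * y 0 - x 0 * y 2, x 0 * y 1 - x 1 * y 0]

/-!
Differentiating `L = r × ṙ + λ r/|r|` gives `r × r̈ + λ (ṙ/|r| - ⟪r, ṙ⟫ r/|r|³)`, since
`ṙ × ṙ = 0`. By the equation of motion and the vector triple product
`r × (r × ṙ) = ⟪r, ṙ⟫ r - |r|² ṙ`, the first term is `λ (⟪r, ṙ⟫ r/|r|³ - ṙ/|r|)`, so `L̇ = 0`
and `L` is constant on the interval by the mean value inequality.
-/

open scoped Matrix

local notation "ℝ³" => EuclideanSpace ℝ (Fin 3)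

theorem cross3_eq_crossProduct (x y : ℝ³) : cross3 x y = WithLp.toLp 2 (x.ofLp ⨯₃ y.ofLp) := rfl

theorem cross3_self (x : ℝ³) : cross3 x x = 0 := by
  simp [cross3_eq_crossProduct]

theorem cross3_smul_right (c : ℝ) (x y : ℝ³) : cross3 x (c • y) = c • cross3 x y := by
  simp [cross3_eq_crossProduct]

theorem cross3_cross3_self (x y : ℝ³) :
    cross3 x (cross3 x y) = ⟪x, y⟫_ℝ • x - ‖x‖ ^ 2 • y := by
  rw [← real_inner_self_eq_norm_sq, EuclideanSpace.inner_eq_star_dotProduct,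
    EuclideanSpace.inner_eq_star_dotProduct]
  simp [cross3_eq_crossProduct, cross_cross_eq_smul_sub_smul', dotProduct_comm]

noncomputable def cross3L : ℝ³ →L[ℝ] ℝ³ →L[ℝ] ℝ³ :=
  let e := WithLp.linearEquiv 2 ℝ (Fin 3 → ℝ)
  ((crossProduct.compl₁₂ e.toLinearMap e.toLinearMap).compr₂
    e.symm.toLinearMap).toContinuousBilinearMap

theorem HasDerivAt.cross3 {f g : ℝ → ℝ³} {f' g' : ℝ³} {t : ℝ}
    (hf : HasDerivAt f f' t) (hg : HasDerivAt g g' t) :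
    HasDerivAt (fun u => cross3 (f u) (g u)) (cross3 (f t) g' + cross3 f' (g t)) t :=
  cross3L.hasDerivAt_of_bilinear (fun _ => hf) (fun _ => hg)

section InnerProductSpace

variable {F : Type*} [NormedAddCommGroup F] [InnerProductSpace ℝ F] {f : ℝ → F} {f' : F} {t : ℝ}

theorem HasDerivAt.norm (hf : HasDerivAt f f' t) (h0 : f t ≠ 0) :
    HasDerivAt (fun u => ‖f u‖) (⟪f t, f'⟫_ℝ / ‖f t‖) t := by
  have h := hf.norm_sq.sqrt (by positivity)
  simp only [Real.sqrt_sq (norm_nonneg _)] at h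
  convert h using 1
  field_simp

theorem HasDerivAt.div_norm_smul (c : ℝ) (hf : HasDerivAt f f' t) (h0 : f t ≠ 0) :
    HasDerivAt (fun u => (c / ‖f u‖) • f u)
      ((c / ‖f t‖) • f' - (c * ⟪f t, f'⟫_ℝ / ‖f t‖ ^ 3) • f t) t := by
  have hc := (hasDerivAt_const t c).div (hf.norm h0) (norm_ne_zero_iff.mpr h0)
  have hcoeff : (0 * ‖f t‖ - c * (⟪f t, f'⟫_ℝ / ‖f t‖)) / ‖f t‖ ^ 2
      = -(c * ⟪f t, f'⟫_ℝ / ‖f t‖ ^ 3) := by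
    field_simp
    ring
  refine (hc.smul hf).congr_deriv ?_
  rw [hcoeff, neg_smul, ← sub_eq_add_neg]
  rfl

end InnerProductSpace

theorem Set.OrdConnected.is_const_of_hasDerivAt_zero {E : Type*} [NormedAddCommGroup E]
    [NormedSpace ℝ E] {f : ℝ → E} {s : Set ℝ} (hs : s.OrdConnected)
    (hf : ∀ x ∈ s, HasDerivAt f 0 x) {x y : ℝ} (hx : x ∈ s) (hy : y ∈ s) : f x = f y := by
  wlog hxy : x ≤ y generalizing x y
  · exact (this hy hx (le_of_not_ge hxy)).symm
  have hsub : Set.Icc x y ⊆ s := hs.out hx hy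
  exact (constant_of_has_deriv_right_zero
    (fun u hu => (hf u (hsub hu)).continuousAt.continuousWithinAt)
    (fun u hu => (hf u (hsub (Set.Ico_subset_Icc_self hu))).hasDerivWithinAt) y
    (Set.right_mem_Icc.mpr hxy)).symm

noncomputable def poincareVector (lam : ℝ) (r r' : ℝ → ℝ³) (t : ℝ) : ℝ³ :=
  cross3 (r t) (r' t) + (lam / ‖r t‖) • r t

theorem hasDerivAt_poincareVector_eq_zero {lam t : ℝ} {r r' : ℝ → ℝ³} (hr : r t ≠ 0)
    (hd1 : HasDerivAt r (r' t) t)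
    (hd2 : HasDerivAt r' ((lam / ‖r t‖ ^ 3) • cross3 (r t) (r' t)) t) :
    HasDerivAt (poincareVector lam r r') 0 t := by
  refine ((hd1.cross3 hd2).add (hd1.div_norm_smul lam hr)).congr_deriv ?_
  have hnorm : lam / ‖r t‖ ^ 3 * ‖r t‖ ^ 2 = lam / ‖r t‖ := by
    field_simp
  rw [cross3_self, cross3_smul_right, cross3_cross3_self, smul_sub, smul_smul, smul_smul, hnorm]
  module

theorem poincare_vector_constant_general
    (lam : ℝ) (I : Set ℝ) (hIconn : I.OrdConnected)
    (r r' r'' : ℝ → EuclideanSpace ℝ (Fin 3))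
    (hne : ∀ t ∈ I, r t ≠ 0)
    (hd1 : ∀ t ∈ I, HasDerivAt r (r' t) t)
    (hd2 : ∀ t ∈ I, HasDerivAt r' (r'' t) t)
    (hode : ∀ t ∈ I, r'' t = (lam / ‖r t‖ ^ 3) • cross3 (r t) (r' t)) :
    ∀ s ∈ I, ∀ t ∈ I,
      cross3 (r s) (r' s) + (lam / ‖r s‖) • r s
        = cross3 (r t) (r' t) + (lam / ‖r t‖) • r t := fun _ hs _ ht =>
  hIconn.is_const_of_hasDerivAt_zero (f := poincareVector lam r r')
    (fun u hu => hasDerivAt_poincareVector_eq_zero (hne u hu) (hd1 u hu) (hode u hu ▸ hd2 u hu))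
    hs ht

/-- For a solution `r` of the Poincaré problem in `ℝ³ ∖ {0}`
(`r̈ = λ (r × ṙ)/|r|³` on an open interval `I`, `r` twice continuously differentiable
and never zero on `I`), the Poincaré vector `L(t) = r(t) × ṙ(t) + λ r(t)/|r(t)|`
is constant on `I`. -/
theorem poincare_vector_constant
    (lam : ℝ) (I : Set ℝ) (hIopen : IsOpen I) (hIconn : I.OrdConnected)
    (r r' r'' : ℝ → EuclideanSpace ℝ (Fin 3))
    (hne : ∀ t ∈ I, r t ≠ 0)
    (hd1 : ∀ t ∈ I, HasDerivAt r (r' t) t)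
    (hd2 : ∀ t ∈ I, HasDerivAt r' (r'' t) t)
    (hC2 : ContinuousOn r'' I)
    (hode : ∀ t ∈ I, r'' t = (lam / ‖r t‖ ^ 3) • cross3 (r t) (r' t)) :
    ∀ s ∈ I, ∀ t ∈ I,
      cross3 (r s) (r' s) + (lam / ‖r s‖) • r s
        = cross3 (r t) (r' t) + (lam / ‖r t‖) • r t :=
  poincare_vector_constant_general lam I hIconn r r' r'' hne hd1 hd2 hode
end

section
/- Let r₀ > 0, v₀ > 0, λ > 0 and set ψ = arctan(r₀ v₀/λ) ∈ (0, π/2). Define r : ℝ → ℝ³ by r(t) = √(r₀² + v₀² t²) · (sin ψ · cos(arctan(v₀ t/r₀)/sin ψ), sin ψ · sin(arctan(v₀ t/r₀)/sin ψ), cos ψ). Then r(t) ≠ 0 for all t, r is twice continuously differentiable, r satisfies r̈(t) = λ (r(t) × ṙ(t))/|r(t)|³ for all t ∈ ℝ, and moreover |r(0)| = r₀ and |ṙ(0)| = v₀. -/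
/-!
Unroll the cone of half-angle `ψ` about the third axis into the plane. A point at distance `ρ`
from the apex and azimuth `θ` goes to the point with polar coordinates `(ρ, θ sin ψ)`, and the
given curve becomes the straight line at distance `r₀` from the origin traversed with speed `v₀`:
`ρ² = r₀² + v₀² t²` and `θ sin ψ = arctan (v₀ t / r₀)`. Free motion along that line has angular
momentum `k = r₀ v₀`, so `ρ² θ' sin ψ = k` and `ρ'' = k² / ρ³`. For any such motion on the cone the
acceleration is normal to the cone, as is `r × ṙ`, and comparing lengths shows
`r̈ = (λ / |r|³) r × ṙ` exactly when `λ sin ψ = k cos ψ`, which is the choice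
`ψ = arctan (r₀ v₀ / λ)`.
-/

open scoped InnerProductSpace
open Real

theorem HasDerivAt.toLp_vecCons₃ {𝕜 E : Type*} [NontriviallyNormedField 𝕜] [NormedAddCommGroup E]
    [NormedSpace 𝕜 E] (p : ENNReal) [Fact (1 ≤ p)] {f g h : 𝕜 → E} {f' g' h' : E} {t : 𝕜}
    (hf : HasDerivAt f f' t) (hg : HasDerivAt g g' t) (hh : HasDerivAt h h' t) :
    HasDerivAt (fun u => WithLp.toLp p ![f u, g u, h u]) (WithLp.toLp p ![f', g', h']) t := by
  have hnil : HasDerivAt (fun _ : 𝕜 => (![] : Fin 0 → E)) ![] t := by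
    simpa [Subsingleton.elim (0 : Fin 0 → E) ![]] using hasDerivAt_const t (![] : Fin 0 → E)
  have hvec : HasDerivAt (fun u => ![f u, g u, h u]) ![f', g', h'] t :=
    hf.finCons (hg.finCons (hh.finCons hnil))
  exact (PiLp.hasFDerivAt_toLp p _).comp_hasDerivAt t hvec

theorem ContDiff.toLp_vecCons₃ {𝕜 E F : Type*} [NontriviallyNormedField 𝕜] [NormedAddCommGroup E]
    [NormedSpace 𝕜 E] [NormedAddCommGroup F] [NormedSpace 𝕜 F] (p : ENNReal) [Fact (1 ≤ p)]
    {n : WithTop ℕ∞} {f g h : F → E}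
    (hf : ContDiff 𝕜 n f) (hg : ContDiff 𝕜 n g) (hh : ContDiff 𝕜 n h) :
    ContDiff 𝕜 n (fun u => WithLp.toLp p ![f u, g u, h u]) := by
  refine contDiff_piLp' p fun i => ?_
  fin_cases i <;> assumption

theorem EuclideanSpace.norm_toLp_vecCons₃ (a b c : ℝ) :
    ‖(WithLp.toLp 2 ![a, b, c] : EuclideanSpace ℝ (Fin 3))‖ = √(a ^ 2 + b ^ 2 + c ^ 2) := by
  simp [EuclideanSpace.norm_eq, Fin.sum_univ_three]

theorem sin_arctan_pos {x : ℝ} (hx : 0 < x) : 0 < sin (arctan x) := by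
  rw [sin_arctan]
  positivity

theorem mul_sin_arctan_div {c : ℝ} (hc : c ≠ 0) (x : ℝ) :
    c * sin (arctan (x / c)) = x * cos (arctan (x / c)) := by
  rw [sin_arctan, cos_arctan]
  field_simp

section UnrolledLine

variable {a : ℝ} (b : ℝ)

theorem hasDerivAt_sqrt_sq_add_sq_mul_sq (ha : a ≠ 0) (t : ℝ) :
    HasDerivAt (fun t => √(a ^ 2 + b ^ 2 * t ^ 2)) (b ^ 2 * t / √(a ^ 2 + b ^ 2 * t ^ 2)) t := by
  have hq : HasDerivAt (fun t => a ^ 2 + b ^ 2 * t ^ 2) (b ^ 2 * (2 * t)) t := by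
    simpa using ((hasDerivAt_pow 2 t).const_mul (b ^ 2)).const_add (a ^ 2)
  refine (hq.sqrt (by positivity)).congr_deriv ?_
  field_simp

theorem hasDerivAt_mul_div_sqrt_sq_add_sq_mul_sq (ha : a ≠ 0) (t : ℝ) :
    HasDerivAt (fun t => b ^ 2 * t / √(a ^ 2 + b ^ 2 * t ^ 2))
      ((a * b) ^ 2 / √(a ^ 2 + b ^ 2 * t ^ 2) ^ 3) t := by
  have hq : 0 < a ^ 2 + b ^ 2 * t ^ 2 := by positivity
  refine (((hasDerivAt_id' t).const_mul (b ^ 2)).div (hasDerivAt_sqrt_sq_add_sq_mul_sq b ha t)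
    (sqrt_pos.2 hq).ne').congr_deriv ?_
  field_simp
  linear_combination b ^ 2 * sq_sqrt hq.le

theorem hasDerivAt_arctan_mul_div (ha : a ≠ 0) (t : ℝ) :
    HasDerivAt (fun t => arctan (b * t / a)) (a * b / (a ^ 2 + b ^ 2 * t ^ 2)) t := by
  refine (((hasDerivAt_id' t).const_mul b).div_const a).arctan.congr_deriv ?_
  field_simp

end UnrolledLine

noncomputable def conePoint (ψ ρ θ : ℝ) : EuclideanSpace ℝ (Fin 3) :=
  ρ • WithLp.toLp 2 ![sin ψ * cos θ, sin ψ * sin θ, cos ψ]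

/-- The velocity at `conePoint ψ ρ θ` of a motion with radial velocity `ρ'` and angular
momentum `k` in the unrolled cone. -/
noncomputable def coneVelocity (ψ k ρ ρ' θ : ℝ) : EuclideanSpace ℝ (Fin 3) :=
  WithLp.toLp 2 ![ρ' * sin ψ * cos θ - k / ρ * sin θ, ρ' * sin ψ * sin θ + k / ρ * cos θ,
    ρ' * cos ψ]

theorem norm_conePoint (ψ ρ θ : ℝ) : ‖conePoint ψ ρ θ‖ = |ρ| := by
  have hunit : (sin ψ * cos θ) ^ 2 + (sin ψ * sin θ) ^ 2 + cos ψ ^ 2 = 1 := by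
    linear_combination sin ψ ^ 2 * sin_sq_add_cos_sq θ + sin_sq_add_cos_sq ψ
  rw [conePoint, norm_smul, EuclideanSpace.norm_toLp_vecCons₃, hunit, sqrt_one, mul_one,
    norm_eq_abs]

theorem conePoint_ne_zero {ψ ρ : ℝ} (hρ : ρ ≠ 0) (θ : ℝ) : conePoint ψ ρ θ ≠ 0 :=
  norm_pos_iff.1 (by rw [norm_conePoint]; exact abs_pos.2 hρ)

theorem norm_coneVelocity (ψ k ρ ρ' θ : ℝ) :
    ‖coneVelocity ψ k ρ ρ' θ‖ = √(ρ' ^ 2 + (k / ρ) ^ 2) := by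
  rw [coneVelocity, EuclideanSpace.norm_toLp_vecCons₃]
  congr 1
  linear_combination ρ' ^ 2 * sin ψ ^ 2 * sin_sq_add_cos_sq θ + ρ' ^ 2 * sin_sq_add_cos_sq ψ
    + (k / ρ) ^ 2 * sin_sq_add_cos_sq θ

theorem smul_cross3_conePoint_coneVelocity {ψ k lam ρ ρ' θ : ℝ} (hs : sin ψ ≠ 0) (hρ : 0 < ρ)
    (hlam : lam * sin ψ = k * cos ψ) :
    (lam / ‖conePoint ψ ρ θ‖ ^ 3) • cross3 (conePoint ψ ρ θ) (coneVelocity ψ k ρ ρ' θ) =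
      WithLp.toLp 2 ![-(k ^ 2 * cos ψ ^ 2 / (sin ψ * ρ ^ 3)) * cos θ,
        -(k ^ 2 * cos ψ ^ 2 / (sin ψ * ρ ^ 3)) * sin θ, k ^ 2 * cos ψ / ρ ^ 3] := by
  rw [norm_conePoint, abs_of_pos hρ]
  ext i
  fin_cases i <;>
    simp only [cross3, conePoint, coneVelocity, WithLp.equiv_symm_apply, PiLp.smul_apply,
      smul_eq_mul, Matrix.cons_val, Matrix.cons_val_zero, Matrix.cons_val_one, Fin.zero_eta,
      Fin.mk_one, Fin.reduceFinMk, Fin.isValue, Nat.succ_eq_add_one, Nat.reduceAdd, neg_mul] <;>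
    field_simp
  · linear_combination (-(cos ψ * k * cos θ)) * hlam
  · linear_combination (-(cos ψ * k * sin θ)) * hlam
  · linear_combination k * hlam + lam * sin ψ * k * sin_sq_add_cos_sq θ

section ConeMotion

variable {ψ k : ℝ} {ρ ρ' θ : ℝ → ℝ} {t : ℝ}

theorem ContDiff.conePoint {n : WithTop ℕ∞} (hρ : ContDiff ℝ n ρ) (hθ : ContDiff ℝ n θ) :
    ContDiff ℝ n (fun t => conePoint ψ (ρ t) (θ t)) :=
  hρ.smul (ContDiff.toLp_vecCons₃ 2 (contDiff_const.mul hθ.cos) (contDiff_const.mul hθ.sin)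
    contDiff_const)

theorem hasDerivAt_conePoint (hs : sin ψ ≠ 0) (hρ : ρ t ≠ 0) (hρd : HasDerivAt ρ (ρ' t) t)
    (hθd : HasDerivAt θ (k / (sin ψ * ρ t ^ 2)) t) :
    HasDerivAt (fun t => conePoint ψ (ρ t) (θ t)) (coneVelocity ψ k (ρ t) (ρ' t) (θ t)) t := by
  have hdir := HasDerivAt.toLp_vecCons₃ 2 (hθd.cos.const_mul (sin ψ)) (hθd.sin.const_mul (sin ψ))
    (hasDerivAt_const t (cos ψ))
  refine (hρd.smul hdir).congr_deriv ?_
  ext i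
  fin_cases i <;>
    simp only [coneVelocity, PiLp.add_apply, PiLp.smul_apply, smul_eq_mul, Matrix.cons_val,
      Matrix.cons_val_zero, Matrix.cons_val_one, Fin.zero_eta, Fin.mk_one, Fin.reduceFinMk,
      Fin.isValue, Nat.succ_eq_add_one, Nat.reduceAdd, neg_mul, mul_neg, mul_zero, zero_add] <;>
    field_simp <;> ring

theorem hasDerivAt_coneVelocity (hs : sin ψ ≠ 0) (hρ : ρ t ≠ 0) (hρd : HasDerivAt ρ (ρ' t) t)
    (hρ'd : HasDerivAt ρ' (k ^ 2 / ρ t ^ 3) t) (hθd : HasDerivAt θ (k / (sin ψ * ρ t ^ 2)) t) :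
    HasDerivAt (fun t => coneVelocity ψ k (ρ t) (ρ' t) (θ t))
      (WithLp.toLp 2 ![-(k ^ 2 * cos ψ ^ 2 / (sin ψ * ρ t ^ 3)) * cos (θ t),
        -(k ^ 2 * cos ψ ^ 2 / (sin ψ * ρ t ^ 3)) * sin (θ t), k ^ 2 * cos ψ / ρ t ^ 3]) t := by
  have hkρ := (hasDerivAt_const t k).div hρd hρ
  refine (HasDerivAt.toLp_vecCons₃ 2
    (((hρ'd.mul_const (sin ψ)).mul hθd.cos).sub (hkρ.mul hθd.sin))
    (((hρ'd.mul_const (sin ψ)).mul hθd.sin).add (hkρ.mul hθd.cos))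
    (hρ'd.mul_const (cos ψ))).congr_deriv ?_
  ext i
  fin_cases i <;>
    simp only [Pi.div_apply, Matrix.cons_val, Matrix.cons_val_zero, Matrix.cons_val_one,
      Fin.zero_eta, Fin.mk_one, Fin.reduceFinMk, Fin.isValue, Nat.succ_eq_add_one, Nat.reduceAdd,
      neg_mul, mul_neg, zero_mul, zero_sub] <;>
    field_simp
  · linear_combination (k ^ 2 * cos (θ t)) * sin_sq_add_cos_sq ψ
  · linear_combination (k ^ 2 * sin (θ t)) * sin_sq_add_cos_sq ψ

theorem conePoint_solves_poincare {lam : ℝ} (hs : sin ψ ≠ 0) (hlam : lam * sin ψ = k * cos ψ)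
    (hρ : ∀ t, 0 < ρ t) (hρd : ∀ t, HasDerivAt ρ (ρ' t) t)
    (hρ'd : ∀ t, HasDerivAt ρ' (k ^ 2 / ρ t ^ 3) t)
    (hθd : ∀ t, HasDerivAt θ (k / (sin ψ * ρ t ^ 2)) t) (t : ℝ) :
    deriv (deriv fun t => conePoint ψ (ρ t) (θ t)) t =
      (lam / ‖conePoint ψ (ρ t) (θ t)‖ ^ 3) •
        cross3 (conePoint ψ (ρ t) (θ t)) (deriv (fun t => conePoint ψ (ρ t) (θ t)) t) := by
  have hvel : deriv (fun t => conePoint ψ (ρ t) (θ t)) =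
      fun t => coneVelocity ψ k (ρ t) (ρ' t) (θ t) :=
    funext fun t => (hasDerivAt_conePoint hs (hρ t).ne' (hρd t) (hθd t)).deriv
  rw [hvel, (hasDerivAt_coneVelocity hs (hρ t).ne' (hρd t) (hρ'd t) (hθd t)).deriv,
    smul_cross3_conePoint_coneVelocity hs (hρ t) hlam]

end ConeMotion

/-- For `r₀, v₀, λ > 0` and `ψ = arctan(r₀ v₀ / λ)`, the explicit curve
`r(t) = √(r₀² + v₀² t²) · (sin ψ cos(arctan(v₀ t/r₀)/sin ψ), sin ψ sin(arctan(v₀ t/r₀)/sin ψ), cos ψ)`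
never vanishes, is twice continuously differentiable, solves the Poincaré problem
`r̈ = λ (r × ṙ)/|r|³` on all of `ℝ`, and satisfies `|r(0)| = r₀` and `|ṙ(0)| = v₀`. -/
theorem poincare_explicit_solution
    (r₀ v₀ lam : ℝ) (hr₀ : 0 < r₀) (hv₀ : 0 < v₀) (hlam : 0 < lam)
    (ψ : ℝ) (hψ : ψ = arctan (r₀ * v₀ / lam))
    (r : ℝ → EuclideanSpace ℝ (Fin 3))
    (hr : ∀ t, r t = Real.sqrt (r₀ ^ 2 + v₀ ^ 2 * t ^ 2) •
      (WithLp.equiv 2 (Fin 3 → ℝ)).symm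
        ![sin ψ * cos (arctan (v₀ * t / r₀) / sin ψ),
          sin ψ * sin (arctan (v₀ * t / r₀) / sin ψ),
          cos ψ]) :
    (∀ t, r t ≠ 0) ∧
    ContDiff ℝ 2 r ∧
    (∀ t, deriv (deriv r) t = (lam / ‖r t‖ ^ 3) • cross3 (r t) (deriv r t)) ∧
    ‖r 0‖ = r₀ ∧ ‖deriv r 0‖ = v₀ := by
  have hs : 0 < sin ψ := hψ ▸ sin_arctan_pos (by positivity)
  have hcone : lam * sin ψ = r₀ * v₀ * cos ψ := hψ ▸ mul_sin_arctan_div hlam.ne' _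
  set ρ : ℝ → ℝ := fun t => √(r₀ ^ 2 + v₀ ^ 2 * t ^ 2)
  set θ : ℝ → ℝ := fun t => arctan (v₀ * t / r₀) / sin ψ
  have hρ : ∀ t, 0 < ρ t := fun t => sqrt_pos.2 (by positivity)
  have hρd : ∀ t, HasDerivAt ρ (v₀ ^ 2 * t / ρ t) t := hasDerivAt_sqrt_sq_add_sq_mul_sq v₀ hr₀.ne'
  have hρ'd : ∀ t, HasDerivAt (fun t => v₀ ^ 2 * t / ρ t) ((r₀ * v₀) ^ 2 / ρ t ^ 3) t :=
    hasDerivAt_mul_div_sqrt_sq_add_sq_mul_sq v₀ hr₀.ne'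
  have hθd : ∀ t, HasDerivAt θ (r₀ * v₀ / (sin ψ * ρ t ^ 2)) t := fun t => by
    refine ((hasDerivAt_arctan_mul_div v₀ hr₀.ne' t).div_const (sin ψ)).congr_deriv ?_
    rw [sq_sqrt (by positivity), mul_comm (sin ψ), div_div]
  obtain rfl : r = fun t => conePoint ψ (ρ t) (θ t) := funext hr
  have hρc : ContDiff ℝ 2 ρ := ContDiff.sqrt (by fun_prop) fun t => by positivity
  have hθc : ContDiff ℝ 2 θ := (contDiff_arctan.comp (by fun_prop)).div_const _
  refine ⟨fun t => conePoint_ne_zero (hρ t).ne' _, hρc.conePoint hθc,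
    conePoint_solves_poincare hs.ne' hcone hρ hρd hρ'd hθd, ?_, ?_⟩
  · simp [norm_conePoint, ρ, sqrt_sq hr₀.le, abs_of_pos hr₀]
  · rw [(hasDerivAt_conePoint (ρ' := fun t => v₀ ^ 2 * t / ρ t) hs.ne' (hρ 0).ne' (hρd 0)
      (hθd 0)).deriv, norm_coneVelocity]
    simp [ρ, sqrt_sq hr₀.le, hr₀.ne', hv₀.le]
end
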